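/- arXiv:1002.2871 — 7 statements merged into one kernel-verified Lean document; each statement's English description precedes it below -/
import Mathlib

section
/- In a stable configuration structure, for every configuration X, a subset Y ⊆ X is a configuration if and only if Y is left-closed with respect to <_X, i.e., whenever d <_X e and e ∈ Y then d ∈ Y. -/
universe u v

/-- A configuration structure over event type `E` and label alphabet `L`:
a family of finite sets of events (configurations) with a labelling. -/
structure CS (E : Type u) (L : Type v) where
  C : Set (Set E)
  finite : ∀ X ∈ C, X.Finite
  label : E → L

namespace CS

variable {E E₁ E₂ : Type u} {L : Type v}

/-- Stability: rooted, connected, closed under bounded unions and intersections. -/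
def IsStable (𝒞 : CS E L) : Prop :=
  ∅ ∈ 𝒞.C ∧
  (∀ X ∈ 𝒞.C, X ≠ ∅ → ∃ e ∈ X, X \ {e} ∈ 𝒞.C) ∧
  (∀ X ∈ 𝒞.C, ∀ Y ∈ 𝒞.C, ∀ Z ∈ 𝒞.C, X ∪ Y ⊆ Z → X ∪ Y ∈ 𝒞.C) ∧
  (∀ X ∈ 𝒞.C, ∀ Y ∈ 𝒞.C, ∀ Z ∈ 𝒞.C, X ∪ Y ⊆ Z → X ∩ Y ∈ 𝒞.C)

/-- Causality: `d ≤_X e` iff every sub-configuration of `X` containing `e` contains `d`. -/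
def le (𝒞 : CS E L) (X : Set E) (d e : E) : Prop :=
  ∀ Y ∈ 𝒞.C, Y ⊆ X → e ∈ Y → d ∈ Y

/-- Strict causality `d <_X e`. -/
def lt (𝒞 : CS E L) (X : Set E) (d e : E) : Prop :=
  le 𝒞 X d e ∧ d ≠ e

/-- Concurrency within a configuration. -/
def co (𝒞 : CS E L) (X : Set E) (d e : E) : Prop :=
  ¬ lt 𝒞 X d e ∧ ¬ lt 𝒞 X e d

/-- The set of minimal events of a configuration. -/
def minE (𝒞 : CS E L) (X : Set E) : Set E :=
  {e | e ∈ X ∧ ∀ d ∈ X, ¬ lt 𝒞 X d e}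

/-- Depth of an event in a configuration: the length of the longest
causal chain (w.r.t. `<_X`) in `X` up to and including `e`. -/
noncomputable def depth (𝒞 : CS E L) (X : Set E) (e : E) : ℕ :=
  sSup {n | ∃ l : List E, l.length = n ∧ l.Chain' (lt 𝒞 X) ∧
    (∀ x ∈ l, x ∈ X) ∧ l.getLast? = some e}

/-- Multiset of labels of a (finite) set of events. -/
noncomputable def labelMS (𝒞 : CS E L) (S : Set E) : Multiset L := by
  classical exact if h : S.Finite then h.toFinset.val.map 𝒞.label else 0

/-- Single-event forward transition `X —a→ X'`. -/
def FTrans (𝒞 : CS E L) (a : L) (X X' : Set E) : Prop :=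
  X ∈ 𝒞.C ∧ X' ∈ 𝒞.C ∧ X ⊆ X' ∧ ∃ e, X' \ X = {e} ∧ 𝒞.label e = a

/-- Single-event reverse transition `X ⇝a X'`. -/
def RTrans (𝒞 : CS E L) (a : L) (X X' : Set E) : Prop :=
  FTrans 𝒞 a X' X

/-- Step transition `X —A→ X'`: the added events are pairwise concurrent
in `X'` and carry the label multiset `A`. -/
def Step (𝒞 : CS E L) (A : Multiset L) (X X' : Set E) : Prop :=
  X ∈ 𝒞.C ∧ X' ∈ 𝒞.C ∧ X ⊆ X' ∧ ∃ F : Finset E, ↑F = X' \ X ∧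
    (∀ d ∈ F, ∀ e ∈ F, co 𝒞 X' d e) ∧ F.val.map 𝒞.label = A

/-- Reverse step transition `X ⇝A X'`. -/
def RStep (𝒞 : CS E L) (A : Multiset L) (X X' : Set E) : Prop :=
  Step 𝒞 A X' X

/-- Equidepth step: all added events have the same depth in `X'`. -/
def EqStep (𝒞 : CS E L) (A : Multiset L) (X X' : Set E) : Prop :=
  Step 𝒞 A X X' ∧ ∀ d ∈ X' \ X, ∀ e ∈ X' \ X, depth 𝒞 X' d = depth 𝒞 X' e

/-- Reverse equidepth step `X ⇝A= X'`. -/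
def REqStep (𝒞 : CS E L) (A : Multiset L) (X X' : Set E) : Prop :=
  EqStep 𝒞 A X' X

/-- Single-event forward transition with depth: the new event has label `a`
and depth `k` in `X'`. -/
def FTransD (𝒞 : CS E L) (a : L) (k : ℕ) (X X' : Set E) : Prop :=
  X ∈ 𝒞.C ∧ X' ∈ 𝒞.C ∧ X ⊆ X' ∧
    ∃ e, X' \ X = {e} ∧ 𝒞.label e = a ∧ depth 𝒞 X' e = k

/-- Single-event reverse transition with depth. -/
def RTransD (𝒞 : CS E L) (a : L) (k : ℕ) (X X' : Set E) : Prop :=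
  FTransD 𝒞 a k X' X

/-- A multiset of labels is homogeneous if all its elements are equal. -/
def Hom (A : Multiset L) : Prop := ∀ a ∈ A, ∀ b ∈ A, a = b

/-- `R` is a relation between configurations of `𝒞` and `𝒟`, containing `(∅, ∅)`. -/
def Dom (𝒞 : CS E₁ L) (𝒟 : CS E₂ L) (R : Set E₁ → Set E₂ → Prop) : Prop :=
  R ∅ ∅ ∧ ∀ X Y, R X Y → X ∈ 𝒞.C ∧ Y ∈ 𝒟.C

/-- Interleaving bisimulation. -/
def IsIB (𝒞 : CS E₁ L) (𝒟 : CS E₂ L) (R : Set E₁ → Set E₂ → Prop) : Prop :=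
  Dom 𝒞 𝒟 R ∧ ∀ X Y, R X Y →
    (∀ a X', FTrans 𝒞 a X X' → ∃ Y', FTrans 𝒟 a Y Y' ∧ R X' Y') ∧
    (∀ a Y', FTrans 𝒟 a Y Y' → ∃ X', FTrans 𝒞 a X X' ∧ R X' Y')

/-- Reverse bisimulation: an IB also matching reverse single-event transitions. -/
def IsRB (𝒞 : CS E₁ L) (𝒟 : CS E₂ L) (R : Set E₁ → Set E₂ → Prop) : Prop :=
  IsIB 𝒞 𝒟 R ∧ ∀ X Y, R X Y →
    (∀ a X', RTrans 𝒞 a X X' → ∃ Y', RTrans 𝒟 a Y Y' ∧ R X' Y') ∧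
    (∀ a Y', RTrans 𝒟 a Y Y' → ∃ X', RTrans 𝒞 a X X' ∧ R X' Y')

/-- Step bisimulation. -/
def IsSB (𝒞 : CS E₁ L) (𝒟 : CS E₂ L) (R : Set E₁ → Set E₂ → Prop) : Prop :=
  Dom 𝒞 𝒟 R ∧ ∀ X Y, R X Y →
    (∀ A X', Step 𝒞 A X X' → ∃ Y', Step 𝒟 A Y Y' ∧ R X' Y') ∧
    (∀ A Y', Step 𝒟 A Y Y' → ∃ X', Step 𝒞 A X X' ∧ R X' Y')

/-- Reverse step bisimulation: an SB also matching reverse steps. -/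
def IsRSB (𝒞 : CS E₁ L) (𝒟 : CS E₂ L) (R : Set E₁ → Set E₂ → Prop) : Prop :=
  IsSB 𝒞 𝒟 R ∧ ∀ X Y, R X Y →
    (∀ A X', RStep 𝒞 A X X' → ∃ Y', RStep 𝒟 A Y Y' ∧ R X' Y') ∧
    (∀ A Y', RStep 𝒟 A Y Y' → ∃ X', RStep 𝒞 A X X' ∧ R X' Y')

/-- Reverse homogeneous step bisimulation: matches forward single-event
transitions and reverse homogeneous steps. -/
def IsRHSB (𝒞 : CS E₁ L) (𝒟 : CS E₂ L) (R : Set E₁ → Set E₂ → Prop) : Prop :=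
  Dom 𝒞 𝒟 R ∧ ∀ X Y, R X Y →
    (∀ a X', FTrans 𝒞 a X X' → ∃ Y', FTrans 𝒟 a Y Y' ∧ R X' Y') ∧
    (∀ a Y', FTrans 𝒟 a Y Y' → ∃ X', FTrans 𝒞 a X X' ∧ R X' Y') ∧
    (∀ A X', Hom A → RStep 𝒞 A X X' → ∃ Y', RStep 𝒟 A Y Y' ∧ R X' Y') ∧
    (∀ A Y', Hom A → RStep 𝒟 A Y Y' → ∃ X', RStep 𝒞 A X X' ∧ R X' Y')

/-- Reverse homogeneous equidepth step bisimulation. -/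
def IsRHESB (𝒞 : CS E₁ L) (𝒟 : CS E₂ L) (R : Set E₁ → Set E₂ → Prop) : Prop :=
  Dom 𝒞 𝒟 R ∧ ∀ X Y, R X Y →
    (∀ a X', FTrans 𝒞 a X X' → ∃ Y', FTrans 𝒟 a Y Y' ∧ R X' Y') ∧
    (∀ a Y', FTrans 𝒟 a Y Y' → ∃ X', FTrans 𝒞 a X X' ∧ R X' Y') ∧
    (∀ A X', Hom A → REqStep 𝒞 A X X' → ∃ Y', REqStep 𝒟 A Y Y' ∧ R X' Y') ∧
    (∀ A Y', Hom A → REqStep 𝒟 A Y Y' → ∃ X', REqStep 𝒞 A X X' ∧ R X' Y')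

/-- Depth-respecting bisimulation. -/
def IsDB (𝒞 : CS E₁ L) (𝒟 : CS E₂ L) (R : Set E₁ → Set E₂ → Prop) : Prop :=
  Dom 𝒞 𝒟 R ∧ ∀ X Y, R X Y →
    (∀ a k X', FTransD 𝒞 a k X X' → ∃ Y', FTransD 𝒟 a k Y Y' ∧ R X' Y') ∧
    (∀ a k Y', FTransD 𝒟 a k Y Y' → ∃ X', FTransD 𝒞 a k X X' ∧ R X' Y')

/-- Reverse depth-respecting bisimulation. -/
def IsRDB (𝒞 : CS E₁ L) (𝒟 : CS E₂ L) (R : Set E₁ → Set E₂ → Prop) : Prop :=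
  IsDB 𝒞 𝒟 R ∧ ∀ X Y, R X Y →
    (∀ a k X', RTransD 𝒞 a k X X' → ∃ Y', RTransD 𝒟 a k Y Y' ∧ R X' Y') ∧
    (∀ a k Y', RTransD 𝒟 a k Y Y' → ∃ X', RTransD 𝒞 a k X X' ∧ R X' Y')

/-- The lifting of a configuration structure w.r.t. a configuration `M`. -/
def lift (𝒞 : CS E L) (M : Set E) : CS E L where
  C := {Z | ∃ X, X ∈ 𝒞.C ∧ M ⊆ X ∧ minE 𝒞 X = minE 𝒞 M ∧ Z = X \ M}
  finite := by
    rintro Z ⟨X, hX, -, -, rfl⟩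
    exact (𝒞.finite X hX).subset Set.diff_subset
  label := 𝒞.label

/-- Events of `X` of depth at most `n`. -/
def levelLe (𝒞 : CS E L) (X : Set E) (n : ℕ) : Set E :=
  {e | e ∈ X ∧ depth 𝒞 X e ≤ n}

/-- Events of `X` of depth exactly `n`. -/
def levelEq (𝒞 : CS E L) (X : Set E) (n : ℕ) : Set E :=
  {e | e ∈ X ∧ depth 𝒞 X e = n}

/-- No equidepth auto-concurrency: distinct concurrent events never share
both label and depth. -/
def NoEqAC (𝒞 : CS E L) : Prop :=
  ∀ X ∈ 𝒞.C, ∀ d ∈ X, ∀ e ∈ X, co 𝒞 X d e → 𝒞.label d = 𝒞.label e →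
    depth 𝒞 X d = depth 𝒞 X e → d = e

/-- `f` (a set of pairs) is a label- and order-preserving isomorphism
between configurations `X` and `Y`. -/
def IsIso (𝒞 : CS E₁ L) (𝒟 : CS E₂ L) (X : Set E₁) (Y : Set E₂)
    (f : Set (E₁ × E₂)) : Prop :=
  (∀ p ∈ f, p.1 ∈ X ∧ p.2 ∈ Y) ∧
  (∀ d ∈ X, ∃! e, (d, e) ∈ f) ∧
  (∀ e ∈ Y, ∃! d, (d, e) ∈ f) ∧
  (∀ p ∈ f, 𝒞.label p.1 = 𝒟.label p.2) ∧
  (∀ p ∈ f, ∀ q ∈ f, (lt 𝒞 X p.1 q.1 ↔ lt 𝒟 Y p.2 q.2))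

/-- Hereditary history-preserving bisimulation. -/
def IsHH (𝒞 : CS E₁ L) (𝒟 : CS E₂ L)
    (R : Set (Set E₁ × Set E₂ × Set (E₁ × E₂))) : Prop :=
  (∅, ∅, ∅) ∈ R ∧
  ∀ X Y f, (X, Y, f) ∈ R →
    X ∈ 𝒞.C ∧ Y ∈ 𝒟.C ∧ IsIso 𝒞 𝒟 X Y f ∧
    (∀ a X', FTrans 𝒞 a X X' → ∃ Y' f', FTrans 𝒟 a Y Y' ∧
      (X', Y', f') ∈ R ∧ {p ∈ f' | p.1 ∈ X} = f) ∧
    (∀ a Y', FTrans 𝒟 a Y Y' → ∃ X' f', FTrans 𝒞 a X X' ∧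
      (X', Y', f') ∈ R ∧ {p ∈ f' | p.1 ∈ X} = f) ∧
    (∀ a X', RTrans 𝒞 a X X' → ∃ Y' f', RTrans 𝒟 a Y Y' ∧
      (X', Y', f') ∈ R ∧ {p ∈ f | p.1 ∈ X'} = f')

end CS

open CS

/-! A left-closed `Y ⊆ X` is the union of the causal pasts `{d ∈ X | d ≤_X e}` of its events.
Each causal past is the intersection of the finitely many sub-configurations of `X` containing
`e`, hence a configuration by closure under bounded intersections; and the union of these finitely
many configurations, bounded by `X`, is again a configuration. -/

namespace CS

variable {E : Type u} {L : Type v} {𝒞 : CS E L} {X : Set E}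

def causalPast (𝒞 : CS E L) (X : Set E) (e : E) : Set E :=
  {d | d ∈ X ∧ le 𝒞 X d e}

namespace IsStable

theorem union_mem (h : IsStable 𝒞) (hX : X ∈ 𝒞.C) {Y Z : Set E}
    (hY : Y ∈ 𝒞.C) (hZ : Z ∈ 𝒞.C) (hYX : Y ⊆ X) (hZX : Z ⊆ X) :
    Y ∪ Z ∈ 𝒞.C :=
  h.2.2.1 Y hY Z hZ X hX (Set.union_subset hYX hZX)

theorem inter_mem (h : IsStable 𝒞) (hX : X ∈ 𝒞.C) {Y Z : Set E}
    (hY : Y ∈ 𝒞.C) (hZ : Z ∈ 𝒞.C) (hYX : Y ⊆ X) (hZX : Z ⊆ X) :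
    Y ∩ Z ∈ 𝒞.C :=
  h.2.2.2 Y hY Z hZ X hX (Set.union_subset hYX hZX)

theorem sUnion_mem (h : IsStable 𝒞) (hX : X ∈ 𝒞.C) {𝒮 : Set (Set E)} (h𝒮 : 𝒮.Finite)
    (hsub : ∀ S ∈ 𝒮, S ∈ 𝒞.C ∧ S ⊆ X) : ⋃₀ 𝒮 ∈ 𝒞.C := by
  induction 𝒮, h𝒮 using Set.Finite.induction_on with
  | empty => simpa using h.1
  | @insert S 𝒮 _ _ ih =>
    have hS := hsub S (Set.mem_insert S 𝒮)
    have h𝒮 : ∀ T ∈ 𝒮, T ∈ 𝒞.C ∧ T ⊆ X := fun T hT => hsub T (Set.mem_insert_of_mem S hT)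
    rw [Set.sUnion_insert]
    exact h.union_mem hX hS.1 (ih h𝒮) hS.2 (Set.sUnion_subset fun T hT => (h𝒮 T hT).2)

theorem inter_sInter_mem (h : IsStable 𝒞) (hX : X ∈ 𝒞.C) {𝒮 : Set (Set E)} (h𝒮 : 𝒮.Finite)
    (hsub : ∀ S ∈ 𝒮, S ∈ 𝒞.C ∧ S ⊆ X) : X ∩ ⋂₀ 𝒮 ∈ 𝒞.C := by
  induction 𝒮, h𝒮 using Set.Finite.induction_on with
  | empty => simpa using hX
  | @insert S 𝒮 _ _ ih =>
    have hS := hsub S (Set.mem_insert S 𝒮)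
    have h𝒮 : ∀ T ∈ 𝒮, T ∈ 𝒞.C ∧ T ⊆ X := fun T hT => hsub T (Set.mem_insert_of_mem S hT)
    rw [Set.sInter_insert, Set.inter_left_comm]
    exact h.inter_mem hX hS.1 (ih h𝒮) hS.2 Set.inter_subset_left

theorem causalPast_mem (h : IsStable 𝒞) (hX : X ∈ 𝒞.C) (e : E) : causalPast 𝒞 X e ∈ 𝒞.C := by
  let 𝒮 := {Z | Z ∈ 𝒞.C ∧ Z ⊆ X ∧ e ∈ Z}
  have h𝒮 : 𝒮.Finite := (𝒞.finite X hX).finite_subsets.subset fun Z hZ => hZ.2.1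
  have hpast : causalPast 𝒞 X e = X ∩ ⋂₀ 𝒮 := by
    ext d
    simp only [causalPast, le, Set.mem_ofPred_eq, Set.mem_inter_iff, Set.mem_sInter, 𝒮]
    exact and_congr_right fun _ => ⟨fun hd Z hZ => hd Z hZ.1 hZ.2.1 hZ.2.2,
      fun hd Z hZ hZX heZ => hd Z ⟨hZ, hZX, heZ⟩⟩
  rw [hpast]
  exact h.inter_sInter_mem hX h𝒮 fun Z hZ => ⟨hZ.1, hZ.2.1⟩

end IsStable

theorem causalPast_subset (𝒞 : CS E L) (X : Set E) (e : E) : causalPast 𝒞 X e ⊆ X :=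
  fun _ hd => hd.1

theorem self_mem_causalPast {e : E} (he : e ∈ X) : e ∈ causalPast 𝒞 X e :=
  ⟨he, fun _ _ _ heZ => heZ⟩

theorem causalPast_subset_of_left_closed {Y : Set E}
    (hY : ∀ d e, e ∈ Y → lt 𝒞 X d e → d ∈ Y) {e : E} (he : e ∈ Y) :
    causalPast 𝒞 X e ⊆ Y := by
  intro d hd
  by_cases hde : d = e
  · exact hde ▸ he
  · exact hY d e he ⟨hd.2, hde⟩

end CS

/-- a subset `Y ⊆ X` of a configuration is a configuration iff it is
left-closed w.r.t. `<_X`. -/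
theorem stmt1 {E : Type u} {L : Type v} (𝒞 : CS E L) (h : IsStable 𝒞)
    (X : Set E) (hX : X ∈ 𝒞.C) (Y : Set E) (hYX : Y ⊆ X) :
    Y ∈ 𝒞.C ↔ (∀ d e, e ∈ Y → lt 𝒞 X d e → d ∈ Y) := by
  refine ⟨fun hY d e heY hlt => hlt.1 Y hY hYX heY, fun hclosed => ?_⟩
  have hY : Y = ⋃₀ (causalPast 𝒞 X '' Y) := by
    refine subset_antisymm (fun e he => ⟨_, ⟨e, he, rfl⟩, self_mem_causalPast (hYX he)⟩) ?_
    rintro d ⟨_, ⟨e, he, rfl⟩, hd⟩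
    exact causalPast_subset_of_left_closed hclosed he hd
  rw [hY]
  refine h.sUnion_mem hX (((𝒞.finite X hX).subset hYX).image _) ?_
  rintro _ ⟨e, -, rfl⟩
  exact ⟨h.causalPast_mem hX e, causalPast_subset 𝒞 X e⟩
end

section
/- In a stable configuration structure, if X and Y are configurations with Y ⊆ X, then the causal order on Y is the restriction of the causal order on X, i.e., <_Y equals <_X restricted to Y. -/
universe u v

open CS

/-- if `Y ⊆ X` are configurations then `<_Y` is the restriction of
`<_X` to `Y`. -/
theorem stmt2 {E : Type u} {L : Type v} (𝒞 : CS E L) (h : IsStable 𝒞)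
    (X Y : Set E) (hX : X ∈ 𝒞.C) (hY : Y ∈ 𝒞.C) (hYX : Y ⊆ X) :
    ∀ d ∈ Y, ∀ e ∈ Y, (lt 𝒞 Y d e ↔ lt 𝒞 X d e) := by
  intro d hd e he
  constructor
  · rintro ⟨hle, hne⟩
    refine ⟨fun Z hZ hZX heZ => ?_, hne⟩
    have hZY : Z ∩ Y ∈ 𝒞.C := h.2.2.2 Z hZ Y hY X hX (Set.union_subset hZX hYX)
    exact (hle (Z ∩ Y) hZY Set.inter_subset_right ⟨heZ, he⟩).1
  · rintro ⟨hle, hne⟩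
    exact ⟨fun Z hZ hZY heZ => hle Z hZ (hZY.trans hYX) heZ, hne⟩
end

section
/- If R is a reverse bisimulation between stable configuration structures C and D, and R(X, Y), then the multiset of labels of X equals the multiset of labels of Y. -/
universe u v

open CS

lemma labelMS_diff {E : Type u} {L : Type v} (𝒞 : CS E L) {S : Set E}
    (hS : S.Finite) {e : E} (he : e ∈ S) :
    labelMS 𝒞 S = 𝒞.label e ::ₘ labelMS 𝒞 (S \ {e}) := by
  classical
  have hS' : (S \ {e}).Finite := hS.subset Set.diff_subset
  simp only [labelMS, dif_pos hS, dif_pos hS']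
  have : hS.toFinset = insert e hS'.toFinset := by
    ext x
    simp only [Set.Finite.mem_toFinset, Finset.mem_insert, Set.mem_diff,
      Set.mem_singleton_iff]
    constructor
    · intro hx; by_cases hxe : x = e
      · exact Or.inl hxe
      · exact Or.inr ⟨hx, hxe⟩
    · rintro (rfl | ⟨hx, -⟩) <;> [exact he; exact hx]
  rw [this, Finset.insert_val, Multiset.ndinsert_of_notMem (by simp),
    Multiset.map_cons]

/-- if `R` is a reverse bisimulation between stable configuration
structures and `R X Y`, then `X` and `Y` have equal multisets of labels. -/
theorem stmt3 {E₁ E₂ : Type u} {L : Type v} (𝒞 : CS E₁ L) (𝒟 : CS E₂ L)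
    (h𝒞 : IsStable 𝒞) (h𝒟 : IsStable 𝒟)
    (R : Set E₁ → Set E₂ → Prop) (hR : IsRB 𝒞 𝒟 R)
    (X : Set E₁) (Y : Set E₂) (hXY : R X Y) :
    labelMS 𝒞 X = labelMS 𝒟 Y := by
  classical
  obtain ⟨⟨⟨-, hdom⟩, -⟩, hrev⟩ := hR
  obtain ⟨hXC, hYC⟩ := hdom X Y hXY
  have hXfin := 𝒞.finite X hXC
  suffices H : ∀ n (X : Set E₁) (Y : Set E₂), R X Y →
      ∀ hf : X.Finite, hf.toFinset.card = n → labelMS 𝒞 X = labelMS 𝒟 Y from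
    H _ X Y hXY hXfin rfl
  intro n
  induction n with
  | zero =>
    intro X Y hXY hf hcard
    have hX0 : X = ∅ :=
      by simpa using Finset.card_eq_zero.mp hcard
    subst hX0
    have hYC := (hdom _ _ hXY).2
    by_cases hY0 : Y = ∅
    · subst hY0; simp [labelMS]
    · exfalso
      obtain ⟨e, heY, heC⟩ := h𝒟.2.1 Y hYC hY0
      have hrt : RTrans 𝒟 (𝒟.label e) Y (Y \ {e}) := by
        refine ⟨heC, hYC, Set.diff_subset, e, ?_, rfl⟩
        rw [Set.diff_diff_cancel_left (by simpa using heY)]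
      obtain ⟨X', hX', -⟩ := (hrev _ _ hXY).2 _ _ hrt
      obtain ⟨-, -, hsub, e', he', -⟩ := hX'
      have : e' ∈ (∅ : Set E₁) \ X' := he' ▸ rfl
      exact this.1
  | succ n ih =>
    intro X Y hXY hf hcard
    have hXC := (hdom _ _ hXY).1
    have hYC := (hdom _ _ hXY).2
    have hX0 : X ≠ ∅ := by
      intro h; subst h; simp at hcard
    obtain ⟨e, heX, heC⟩ := h𝒞.2.1 X hXC hX0
    have hrt : RTrans 𝒞 (𝒞.label e) X (X \ {e}) := by
      refine ⟨heC, hXC, Set.diff_subset, e, ?_, rfl⟩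
      rw [Set.diff_diff_cancel_left (by simpa using heX)]
    obtain ⟨Y', hY', hR'⟩ := (hrev _ _ hXY).1 _ _ hrt
    obtain ⟨hY'C, -, hsub, f, hfeq, hlab⟩ := hY'
    have hf' : (X \ {e}).Finite := hf.subset Set.diff_subset
    have hcard' : hf'.toFinset.card = n := by
      have : hf'.toFinset = hf.toFinset.erase e := by
        ext x; simp [Set.mem_diff, and_comm]
      rw [this, Finset.card_erase_of_mem (by simpa using heX), hcard]
      rfl
    have hIH := ih (X \ {e}) Y' hR' hf' hcard'
    have hfY : f ∈ Y := by
      have : f ∈ Y \ Y' := hfeq ▸ rfl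
      exact this.1
    have hY'eq : Y' = Y \ {f} := by
      apply Set.eq_of_subset_of_subset
      · intro x hx
        refine ⟨hsub hx, ?_⟩
        intro hxf
        have : x ∈ Y \ Y' := hfeq ▸ hxf
        exact this.2 hx
      · intro x hx
        by_contra hxY'
        have : x ∈ Y \ Y' := ⟨hx.1, hxY'⟩
        exact hx.2 (hfeq ▸ this)
    rw [labelMS_diff 𝒞 hf heX, labelMS_diff 𝒟 (𝒟.finite Y hYC) hfY,
      hIH, hY'eq, hlab]
end

section
/- Let R be a reverse homogeneous step bisimulation between stable configuration structures C and D. If R(X, Y), then R(min(X), min(Y)), where min(X) is the set of minimal events of X with respect to <_X. -/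
universe u v

open CS

/-!
Undoing events one at a time (connectedness and closure under bounded unions and
intersections let one shrink any configuration down to a given sub-configuration) transports
`R X Y` to `R (min X) Y₁` with `Y₁ ⊆ Y`; along the way the bisimulation preserves label
multisets, hence cardinalities. Every subset of `min X` is a configuration, so any label class of
`min X` can be undone in a single homogeneous reverse step, and matching these steps forces the
events of `Y₁` to be pairwise concurrent and minimal in `Y`. By symmetry
`|min Y| ≤ |min X| = |Y₁|`, so `Y₁ = min Y`.
-/

namespace CS

variable {E E₁ E₂ : Type u} {L : Type v}

section LabelMultiset

variable (𝒞 : CS E L) {S : Set E}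

theorem labelMS_of_finite (hS : S.Finite) : labelMS 𝒞 S = hS.toFinset.val.map 𝒞.label := by
  simp only [labelMS, dif_pos hS]

@[simp]
theorem labelMS_empty : labelMS 𝒞 ∅ = 0 := by
  simp [labelMS_of_finite 𝒞 Set.finite_empty]

theorem labelMS_eq_cons (hS : S.Finite) {e : E} (he : e ∈ S) :
    labelMS 𝒞 S = 𝒞.label e ::ₘ labelMS 𝒞 (S \ {e}) := by
  classical
  have hS' : (S \ {e}).Finite := hS.sdiff
  have herase : hS'.toFinset = hS.toFinset.erase e := by
    ext x
    simp [and_comm]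
  rw [labelMS_of_finite 𝒞 hS, labelMS_of_finite 𝒞 hS', herase, Finset.erase_val,
    ← Multiset.map_cons, Multiset.cons_erase (by simpa using he)]

theorem mem_labelMS (hS : S.Finite) {a : L} : a ∈ labelMS 𝒞 S ↔ ∃ x ∈ S, 𝒞.label x = a := by
  simp [labelMS_of_finite 𝒞 hS]

theorem card_labelMS (hS : S.Finite) : Multiset.card (labelMS 𝒞 S) = S.ncard := by
  rw [labelMS_of_finite 𝒞 hS, Multiset.card_map, Set.ncard_eq_toFinset_card _ hS]
  rfl

end LabelMultiset

section Causality

variable {𝒞 : CS E L}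

theorem minE_subset (X : Set E) : minE 𝒞 X ⊆ X := fun _ he => he.1

theorem not_lt_of_singleton_mem {X : Set E} {d e : E} (he : {e} ∈ 𝒞.C) (heX : e ∈ X) :
    ¬ lt 𝒞 X d e :=
  fun ⟨hle, hne⟩ => hne (hle {e} he (Set.singleton_subset_iff.2 heX) rfl)

/-- A configuration `V ⊆ Y` is downward closed in `Y`, so `d <_Y e` with `e ∈ V` is witnessed
inside `V`. -/
theorem minE_subset_minE_of_subset {V Y : Set E} (hV : V ∈ 𝒞.C) (hVY : V ⊆ Y) :
    minE 𝒞 V ⊆ minE 𝒞 Y := by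
  rintro e ⟨heV, hmin⟩
  refine ⟨hVY heV, fun d _ ⟨hle, hne⟩ => ?_⟩
  have hdV : d ∈ V := hle V hV hVY heV
  exact hmin d hdV ⟨fun W hW hWV heW => hle W hW (hWV.trans hVY) heW, hne⟩

end Causality

section Stable

variable {𝒞 : CS E L}

theorem IsStable.singleton_mem_of_mem_minE (h : IsStable 𝒞) {X : Set E} (hX : X ∈ 𝒞.C)
    {e : E} (he : e ∈ minE 𝒞 X) : {e} ∈ 𝒞.C := by
  have hfin : {Z | Z ∈ 𝒞.C ∧ Z ⊆ X ∧ e ∈ Z}.Finite :=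
    (𝒞.finite X hX).finite_subsets.subset fun Z hZ => hZ.2.1
  obtain ⟨Z, ⟨hZ, hZX, heZ⟩, hZmin⟩ := hfin.exists_minimal ⟨X, hX, subset_rfl, he.1⟩
  -- Any other `d ∈ Z` is separated from `e` by a sub-configuration `W`, and `Z ∩ W ⊂ Z`.
  suffices hZe : Z = {e} from hZe ▸ hZ
  refine Set.eq_singleton_iff_unique_mem.2 ⟨heZ, fun d hdZ => ?_⟩
  by_contra hde
  have hnle : ¬ le 𝒞 X d e := fun hle => he.2 d (hZX hdZ) ⟨hle, hde⟩
  simp only [le, not_forall] at hnle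
  obtain ⟨W, hW, hWX, heW, hdW⟩ := hnle
  have hZW : Z ∩ W ∈ 𝒞.C := h.2.2.2 Z hZ W hW X hX (Set.union_subset hZX hWX)
  exact hdW (hZmin ⟨hZW, Set.inter_subset_left.trans hZX, heZ, heW⟩ Set.inter_subset_left hdZ).2

theorem IsStable.mem_of_subset_minE (h : IsStable 𝒞) {X : Set E} (hX : X ∈ 𝒞.C) {S : Set E}
    (hS : S ⊆ minE 𝒞 X) : S ∈ 𝒞.C := by
  have hfin : S.Finite := (𝒞.finite X hX).subset (hS.trans (minE_subset X))
  induction S, hfin using Set.Finite.induction_on with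
  | empty => exact h.1
  | @insert a S _ _ ih =>
    have haS := Set.insert_subset_iff.1 hS
    rw [Set.insert_eq]
    exact h.2.2.1 _ (h.singleton_mem_of_mem_minE hX haS.1) _ (ih haS.2) X hX
      (Set.singleton_union ▸ hS.trans (minE_subset X))

theorem IsStable.exists_diff_singleton_mem_of_ssubset (h : IsStable 𝒞) {M Z : Set E}
    (hM : M ∈ 𝒞.C) (hZ : Z ∈ 𝒞.C) (hMZ : M ⊂ Z) : ∃ e ∈ Z \ M, Z \ {e} ∈ 𝒞.C := by
  obtain ⟨n, hn⟩ : ∃ n, Z.ncard = n := ⟨_, rfl⟩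
  induction n generalizing M Z with
  | zero =>
    rw [Set.ncard_eq_zero (𝒞.finite Z hZ)] at hn
    exact absurd hn (Set.nonempty_of_ssubset' hMZ).ne_empty
  | succ n ih =>
    obtain ⟨e₀, he₀Z, hZe₀⟩ := h.2.1 Z hZ (Set.nonempty_of_ssubset' hMZ).ne_empty
    by_cases he₀M : e₀ ∈ M
    swap
    · exact ⟨e₀, ⟨he₀Z, he₀M⟩, hZe₀⟩
    -- Remove `e₀` from both sides, recurse, and put `e₀` back through `M`.
    have hMe₀ : M \ {e₀} ∈ 𝒞.C := by
      have := h.2.2.2 M hM _ hZe₀ Z hZ (Set.union_subset hMZ.subset Set.sdiff_subset)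
      rwa [← Set.inter_sdiff_assoc, Set.inter_eq_left.2 hMZ.subset] at this
    have hsub : M \ {e₀} ⊂ Z \ {e₀} := by
      obtain ⟨x, hxZ, hxM⟩ := (Set.ssubset_iff_of_subset hMZ.subset).1 hMZ
      refine (Set.ssubset_iff_of_subset (Set.sdiff_subset_sdiff_left hMZ.subset)).2
        ⟨x, ⟨hxZ, ?_⟩, fun hx => hxM hx.1⟩
      rintro rfl
      exact hxM he₀M
    have hcard : (Z \ {e₀}).ncard = n := by
      rw [Set.ncard_sdiff_singleton_of_mem he₀Z, hn, Nat.add_sub_cancel]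
    obtain ⟨e, ⟨⟨heZ, hee₀ : e ≠ e₀⟩, heM⟩, hZe⟩ := ih hMe₀ hZe₀ hsub hcard
    have heM : e ∉ M := fun he => heM ⟨he, hee₀⟩
    refine ⟨e, ⟨heZ, heM⟩, ?_⟩
    have hunion : ((Z \ {e₀}) \ {e}) ∪ M = Z \ {e} := by
      ext x
      by_cases hx : x = e₀
      · subst hx
        simp [he₀M, he₀Z, hee₀.symm]
      · have hxZ : x ∈ M → x ∈ Z := fun hxM => hMZ.subset hxM
        have hxe : x ∈ M → x ≠ e := fun hxM hxe => heM (hxe ▸ hxM)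
        simp only [Set.mem_union, Set.mem_sdiff, Set.mem_singleton_iff]
        tauto
    rw [← hunion]
    exact h.2.2.1 _ hZe M hM Z hZ
      (Set.union_subset (Set.sdiff_subset.trans Set.sdiff_subset) hMZ.subset)

end Stable

section Steps

variable {𝒞 : CS E L}

theorem rstep_diff_singleton {X : Set E} {e : E} (hX : X ∈ 𝒞.C) (hXe : X \ {e} ∈ 𝒞.C)
    (he : e ∈ X) : RStep 𝒞 {𝒞.label e} X (X \ {e}) := by
  refine ⟨hXe, hX, Set.sdiff_subset, {e}, ?_, ?_, by simp⟩
  · rw [Set.sdiff_sdiff_cancel_left (Set.singleton_subset_iff.2 he), Finset.coe_singleton]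
  · intro d hd f hf
    rw [Finset.mem_singleton] at hd hf
    subst hd hf
    exact ⟨fun h => h.2 rfl, fun h => h.2 rfl⟩

theorem RStep.exists_eq_diff_singleton {Y Y' : Set E} {a : L} (h : RStep 𝒞 {a} Y Y') :
    ∃ f ∈ Y, 𝒞.label f = a ∧ Y' = Y \ {f} := by
  obtain ⟨-, -, hsub, F, hF, -, hmap⟩ := h
  obtain ⟨f, rfl⟩ : ∃ f, F = {f} :=
    Finset.card_eq_one.1 (by simpa using congrArg Multiset.card hmap)
  rw [Finset.coe_singleton] at hF
  have hf : f ∈ Y \ Y' := hF ▸ Set.mem_singleton f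
  refine ⟨f, hf.1, by simpa using hmap, ?_⟩
  rw [hF, Set.sdiff_sdiff_cancel_left hsub]

theorem rstep_of_forall_subset_mem {U S : Set E} (hU : ∀ T ⊆ U, T ∈ 𝒞.C) (hSU : S ⊆ U) :
    RStep 𝒞 (labelMS 𝒞 (U \ S)) U S := by
  have hfin : (U \ S).Finite := (𝒞.finite U (hU U subset_rfl)).sdiff
  have hsingleton : ∀ e ∈ U, ({e} : Set E) ∈ 𝒞.C := fun e he =>
    hU {e} (Set.singleton_subset_iff.2 he)
  refine ⟨hU S hSU, hU U subset_rfl, hSU, hfin.toFinset, hfin.coe_toFinset,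
    fun d hd e he => ?_, (labelMS_of_finite 𝒞 hfin).symm⟩
  rw [Set.Finite.mem_toFinset] at hd he
  exact ⟨not_lt_of_singleton_mem (hsingleton e he.1) he.1,
    not_lt_of_singleton_mem (hsingleton d hd.1) hd.1⟩

end Steps

section Bisimulation

variable {𝒞 : CS E₁ L} {𝒟 : CS E₂ L} {R : Set E₁ → Set E₂ → Prop}

theorem IsRHSB.symm (hR : IsRHSB 𝒞 𝒟 R) : IsRHSB 𝒟 𝒞 (fun Y X => R X Y) := by
  obtain ⟨⟨h0, hdom⟩, hsim⟩ := hR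
  refine ⟨⟨h0, fun Y X hXY => (hdom X Y hXY).symm⟩, fun Y X hXY => ?_⟩
  obtain ⟨h1, h2, h3, h4⟩ := hsim X Y hXY
  exact ⟨h2, h1, h4, h3⟩

theorem IsRHSB.exists_rel_diff_singleton (hR : IsRHSB 𝒞 𝒟 R) {X : Set E₁} {Y : Set E₂}
    (hXY : R X Y) {e : E₁} (he : e ∈ X) (hXe : X \ {e} ∈ 𝒞.C) :
    ∃ f ∈ Y, 𝒟.label f = 𝒞.label e ∧ R (X \ {e}) (Y \ {f}) := by
  have hhom : Hom ({𝒞.label e} : Multiset L) := fun a ha b hb => by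
    rw [Multiset.mem_singleton] at ha hb
    rw [ha, hb]
  obtain ⟨Y', hYY', hXY'⟩ := (hR.2 X Y hXY).2.2.1 _ _ hhom
    (rstep_diff_singleton (hR.1.2 X Y hXY).1 hXe he)
  obtain ⟨f, hf, hlabel, rfl⟩ := hYY'.exists_eq_diff_singleton
  exact ⟨f, hf, hlabel, hXY'⟩

theorem IsRHSB.eq_empty_of_rel_empty (h𝒟 : IsStable 𝒟) (hR : IsRHSB 𝒞 𝒟 R) {Y : Set E₂}
    (h : R ∅ Y) : Y = ∅ := by
  by_contra hY
  obtain ⟨f, hf, hYf⟩ := h𝒟.2.1 Y (hR.1.2 ∅ Y h).2 hY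
  obtain ⟨e, he, -⟩ := hR.symm.exists_rel_diff_singleton h hf hYf
  exact he

theorem IsRHSB.labelMS_eq_of_rel (h𝒞 : IsStable 𝒞) (h𝒟 : IsStable 𝒟) (hR : IsRHSB 𝒞 𝒟 R)
    {X : Set E₁} {Y : Set E₂} (hXY : R X Y) : labelMS 𝒞 X = labelMS 𝒟 Y := by
  obtain ⟨n, hn⟩ : ∃ n, X.ncard = n := ⟨_, rfl⟩
  induction n generalizing X Y with
  | zero =>
    obtain rfl : X = ∅ := (Set.ncard_eq_zero (𝒞.finite X (hR.1.2 X Y hXY).1)).1 hn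
    rw [hR.eq_empty_of_rel_empty h𝒟 hXY, labelMS_empty, labelMS_empty]
  | succ n ih =>
    obtain ⟨hX, hY⟩ := hR.1.2 X Y hXY
    have hXfin := 𝒞.finite X hX
    obtain ⟨e, he, hXe⟩ := h𝒞.2.1 X hX (Set.nonempty_of_ncard_ne_zero (by omega)).ne_empty
    obtain ⟨f, hf, hlabel, hrel⟩ := hR.exists_rel_diff_singleton hXY he hXe
    rw [labelMS_eq_cons 𝒞 hXfin he, labelMS_eq_cons 𝒟 (𝒟.finite Y hY) hf, hlabel,
      ih hrel (by rw [Set.ncard_sdiff_singleton_of_mem he, hn, Nat.add_sub_cancel])]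

theorem IsRHSB.ncard_eq_of_rel (h𝒞 : IsStable 𝒞) (h𝒟 : IsStable 𝒟) (hR : IsRHSB 𝒞 𝒟 R)
    {X : Set E₁} {Y : Set E₂} (hXY : R X Y) : X.ncard = Y.ncard := by
  obtain ⟨hX, hY⟩ := hR.1.2 X Y hXY
  rw [← card_labelMS 𝒞 (𝒞.finite X hX), ← card_labelMS 𝒟 (𝒟.finite Y hY),
    hR.labelMS_eq_of_rel h𝒞 h𝒟 hXY]

theorem IsRHSB.exists_rel_of_subset (h𝒞 : IsStable 𝒞) (hR : IsRHSB 𝒞 𝒟 R) {M Z : Set E₁}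
    {W : Set E₂} (hZW : R Z W) (hM : M ∈ 𝒞.C) (hMZ : M ⊆ Z) : ∃ W' ⊆ W, R M W' := by
  obtain ⟨n, hn⟩ : ∃ n, (Z \ M).ncard = n := ⟨_, rfl⟩
  induction n generalizing Z W with
  | zero =>
    have hZ := (hR.1.2 Z W hZW).1
    have hZM : Z \ M = ∅ := (Set.ncard_eq_zero (𝒞.finite Z hZ).sdiff).1 hn
    obtain rfl : M = Z := hMZ.antisymm (Set.sdiff_eq_empty.1 hZM)
    exact ⟨W, subset_rfl, hZW⟩
  | succ n ih =>
    have hZ := (hR.1.2 Z W hZW).1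
    have hMZ' : M ⊂ Z := hMZ.ssubset_of_ne (by rintro rfl; simp at hn)
    obtain ⟨e, ⟨heZ, heM⟩, hZe⟩ := h𝒞.exists_diff_singleton_mem_of_ssubset hM hZ hMZ'
    obtain ⟨f, -, -, hrel⟩ := hR.exists_rel_diff_singleton hZW heZ hZe
    have hcard : ((Z \ {e}) \ M).ncard = n := by
      rw [sdiff_right_comm, Set.ncard_sdiff_singleton_of_mem (Set.mem_sdiff_of_mem heZ heM), hn,
        Nat.add_sub_cancel]
    obtain ⟨W', hW', hMW'⟩ :=
      ih hrel (fun x hx => ⟨hMZ hx, fun hxe => heM (hxe ▸ hx)⟩) hcard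
    exact ⟨W', hW'.trans Set.sdiff_subset, hMW'⟩

/-- Undoing all events of `U` with the label `b` of `d` is a homogeneous reverse step. Its match
`V ⇝ V'` leaves no `b`-labelled event in `V'`, so it undoes `d`; then it undoes every `f` above `d`
too, and the undone events are pairwise concurrent, so `d <_V f` is impossible. -/
theorem IsRHSB.subset_minE_of_rel (h𝒞 : IsStable 𝒞) (h𝒟 : IsStable 𝒟) (hR : IsRHSB 𝒞 𝒟 R)
    {U : Set E₁} {V : Set E₂} (hUV : R U V) (hU : ∀ S ⊆ U, S ∈ 𝒞.C) : V ⊆ minE 𝒟 V := by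
  intro f hf
  refine ⟨hf, fun d _ hdf => ?_⟩
  set b := 𝒟.label d
  set U' := U \ {u | 𝒞.label u = b}
  have hUfin : U.Finite := 𝒞.finite U (hU U subset_rfl)
  have hhom : Hom (labelMS 𝒞 (U \ U')) := by
    have hb : ∀ a ∈ labelMS 𝒞 (U \ U'), a = b := by
      intro a ha
      obtain ⟨x, hx, rfl⟩ := (mem_labelMS 𝒞 hUfin.sdiff).1 ha
      by_contra hxb
      exact hx.2 ⟨hx.1, hxb⟩
    exact fun a ha a' ha' => (hb a ha).trans (hb a' ha').symm
  obtain ⟨V', hVV', hUV'⟩ := (hR.2 U V hUV).2.2.1 _ _ hhom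
    (rstep_of_forall_subset_mem hU Set.sdiff_subset)
  obtain ⟨hV', -, hV'V, G, hG, hco, -⟩ := hVV'
  have hdV' : d ∉ V' := by
    intro hdV'
    have hbV' : b ∈ labelMS 𝒟 V' := (mem_labelMS 𝒟 (𝒟.finite V' hV')).2 ⟨d, hdV', rfl⟩
    rw [← hR.labelMS_eq_of_rel h𝒞 h𝒟 hUV', mem_labelMS 𝒞 hUfin.sdiff] at hbV'
    obtain ⟨x, hx, hxb⟩ := hbV'
    exact hx.2 hxb
  have hfV' : f ∉ V' := fun hfV' => hdV' (hdf.1 V' hV' hV'V hfV')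
  have hmemG : ∀ x ∈ V, x ∉ V' → x ∈ G := fun x hx hxV' => by
    rw [← Finset.mem_coe, hG]
    exact ⟨hx, hxV'⟩
  exact (hco d (hmemG d (hdf.1 V (hR.1.2 U V hUV).2 subset_rfl hf) hdV') f (hmemG f hf hfV')).1 hdf

theorem IsRHSB.exists_rel_minE (h𝒞 : IsStable 𝒞) (h𝒟 : IsStable 𝒟) (hR : IsRHSB 𝒞 𝒟 R)
    {X : Set E₁} {Y : Set E₂} (hXY : R X Y) : ∃ Y₁ ⊆ minE 𝒟 Y, R (minE 𝒞 X) Y₁ := by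
  have hX := (hR.1.2 X Y hXY).1
  have hminX : ∀ S ⊆ minE 𝒞 X, S ∈ 𝒞.C := fun S hS => h𝒞.mem_of_subset_minE hX hS
  obtain ⟨Y₁, hY₁Y, hXY₁⟩ := hR.exists_rel_of_subset h𝒞 hXY (hminX _ subset_rfl) (minE_subset X)
  refine ⟨Y₁, ?_, hXY₁⟩
  calc Y₁ ⊆ minE 𝒟 Y₁ := hR.subset_minE_of_rel h𝒞 h𝒟 hXY₁ hminX
    _ ⊆ minE 𝒟 Y := minE_subset_minE_of_subset (hR.1.2 _ _ hXY₁).2 hY₁Y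

end Bisimulation

end CS

/-- a reverse homogeneous step bisimulation relates the sets of
minimal events of related configurations. -/
theorem stmt4 {E₁ E₂ : Type u} {L : Type v} (𝒞 : CS E₁ L) (𝒟 : CS E₂ L)
    (h𝒞 : IsStable 𝒞) (h𝒟 : IsStable 𝒟)
    (R : Set E₁ → Set E₂ → Prop) (hR : IsRHSB 𝒞 𝒟 R)
    (X : Set E₁) (Y : Set E₂) (hXY : R X Y) :
    R (minE 𝒞 X) (minE 𝒟 Y) := by
  obtain ⟨Y₁, hY₁, hXY₁⟩ := hR.exists_rel_minE h𝒞 h𝒟 hXY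
  obtain ⟨X₁, hX₁, hX₁Y⟩ := hR.symm.exists_rel_minE h𝒟 h𝒞 hXY
  obtain ⟨hX, hY⟩ := hR.1.2 X Y hXY
  have hcard : (minE 𝒟 Y).ncard ≤ Y₁.ncard :=
    calc (minE 𝒟 Y).ncard = X₁.ncard := hR.symm.ncard_eq_of_rel h𝒟 h𝒞 hX₁Y
      _ ≤ (minE 𝒞 X).ncard := Set.ncard_le_ncard hX₁ ((𝒞.finite X hX).subset (minE_subset X))
      _ = Y₁.ncard := hR.ncard_eq_of_rel h𝒞 h𝒟 hXY₁
  rwa [Set.eq_of_subset_of_ncard_le hY₁ hcard ((𝒟.finite Y hY).subset (minE_subset Y))] at hXY₁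
end

section
/- Let C be a stable configuration structure and M a configuration of C. Then the lifting C_M, whose configurations are the sets X \ M for configurations X ⊇ M with min(X) = min(M), is again a stable configuration structure. -/
universe u v

open CS

section Aux

variable {E : Type u} {L : Type v} (𝒞 : CS E L)

lemma aux_le_of_le_sub (h : IsStable 𝒞) {X Y : Set E} {d e : E}
    (hY : Y ∈ 𝒞.C) (hX : X ∈ 𝒞.C) (hYX : Y ⊆ X) (he : e ∈ Y)
    (hle : le 𝒞 Y d e) : le 𝒞 X d e := by
  intro Z hZ hZX heZ
  have hZY : Z ∩ Y ∈ 𝒞.C := h.2.2.2 Z hZ Y hY X hX (Set.union_subset hZX hYX)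
  exact (hle (Z ∩ Y) hZY Set.inter_subset_right ⟨heZ, he⟩).1

lemma aux_minE_inter (h : IsStable 𝒞) {X Y : Set E}
    (hY : Y ∈ 𝒞.C) (hX : X ∈ 𝒞.C) (hYX : Y ⊆ X) :
    minE 𝒞 Y = minE 𝒞 X ∩ Y := by
  ext e
  constructor
  · rintro ⟨heY, hmin⟩
    refine ⟨⟨hYX heY, ?_⟩, heY⟩
    rintro d hdX ⟨hled, hne⟩
    have hdY : d ∈ Y := hled Y hY hYX heY
    exact hmin d hdY ⟨fun Z hZ hZY heZ => hled Z hZ (hZY.trans hYX) heZ, hne⟩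
  · rintro ⟨⟨heX, hmin⟩, heY⟩
    refine ⟨heY, ?_⟩
    rintro d hdY ⟨hled, hne⟩
    exact hmin d (hYX hdY) ⟨aux_le_of_le_sub 𝒞 h hY hX hYX heY hled, hne⟩

lemma aux_minE_sandwich (h : IsStable 𝒞) {M Y X : Set E}
    (hY : Y ∈ 𝒞.C) (hX : X ∈ 𝒞.C)
    (hMY : M ⊆ Y) (hYX : Y ⊆ X) (hmin : minE 𝒞 X = minE 𝒞 M) :
    minE 𝒞 Y = minE 𝒞 M := by
  have h1 := aux_minE_inter 𝒞 h hY hX hYX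
  have h2 : minE 𝒞 X ⊆ Y := by
    rw [hmin]; exact fun e he => hMY he.1
  rw [h1, Set.inter_eq_left.mpr h2, hmin]

lemma aux_biUnion_mem {ι : Type*} (h : IsStable 𝒞) {X : Set E} (hX : X ∈ 𝒞.C)
    (S : Finset ι) (f : ι → Set E) (hS : ∀ i ∈ S, f i ∈ 𝒞.C ∧ f i ⊆ X) :
    (⋃ i ∈ S, f i) ∈ 𝒞.C := by
  classical
  induction S using Finset.induction_on with
  | empty => simpa using h.1
  | @insert i S hni ih =>
    rw [Finset.set_biUnion_insert]
    have hi := hS i (Finset.mem_insert_self _ _)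
    have ih' := ih (fun j hj => hS j (Finset.mem_insert_of_mem hj))
    exact h.2.2.1 (f i) hi.1 _ ih' X hX
      (Set.union_subset hi.2
        (Set.iUnion₂_subset fun j hj => (hS j (Finset.mem_insert_of_mem hj)).2))

lemma aux_biInter_mem {ι : Type*} (h : IsStable 𝒞) {X : Set E} (hX : X ∈ 𝒞.C)
    (S : Finset ι) (f : ι → Set E) (hS : ∀ i ∈ S, f i ∈ 𝒞.C ∧ f i ⊆ X) :
    ((⋂ i ∈ S, f i) ∩ X) ∈ 𝒞.C := by
  classical
  induction S using Finset.induction_on with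
  | empty => simpa using hX
  | @insert i S hni ih =>
    rw [Finset.set_biInter_insert, Set.inter_assoc]
    have hi := hS i (Finset.mem_insert_self _ _)
    have ih' := ih (fun j hj => hS j (Finset.mem_insert_of_mem hj))
    exact h.2.2.2 (f i) hi.1 _ ih' X hX
      (Set.union_subset hi.2 Set.inter_subset_right)

lemma aux_down_mem (h : IsStable 𝒞) {X : Set E} (hX : X ∈ 𝒞.C) {d : E}
    (hd : d ∈ X) : {d' | le 𝒞 X d' d} ∈ 𝒞.C := by
  classical
  have hfin : {Y | Y ⊆ X}.Finite := Set.Finite.finite_subsets (𝒞.finite X hX)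
  have hfin2 : {Y | Y ∈ 𝒞.C ∧ Y ⊆ X ∧ d ∈ Y}.Finite :=
    hfin.subset fun Y hY => hY.2.1
  have key : {d' | le 𝒞 X d' d} = (⋂ Y ∈ hfin2.toFinset, Y) ∩ X := by
    ext d'
    simp only [Set.mem_inter_iff, Set.mem_iInter, Set.Finite.mem_toFinset,
      Set.mem_setOf_eq]
    constructor
    · intro hle
      exact ⟨fun Y hY => hle Y hY.1 hY.2.1 hY.2.2, hle X hX subset_rfl hd⟩
    · rintro ⟨h1, _⟩ Y hY hYX hdY
      exact h1 Y ⟨hY, hYX, hdY⟩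
  rw [key]
  exact aux_biInter_mem 𝒞 h hX _ _ (fun Y hY => by
    have hm := hfin2.mem_toFinset.mp hY
    exact ⟨hm.1, hm.2.1⟩)

lemma aux_lt_asymm (h : IsStable 𝒞) {X : Set E} (hX : X ∈ 𝒞.C) {d e : E}
    (he : e ∈ X) (hde : lt 𝒞 X d e) (hed : lt 𝒞 X e d) : False := by
  set D : Set E := {d' | le 𝒞 X d' e} with hD
  have hDC : D ∈ 𝒞.C := aux_down_mem 𝒞 h hX he
  have heD : e ∈ D := fun Z _ _ hz => hz
  have hDX : D ⊆ X := fun x hx => hx X hX subset_rfl he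
  have hDne : D ≠ ∅ := fun hc => by simp [hc] at heD
  obtain ⟨x, hxD, hxC⟩ := h.2.1 D hDC hDne
  by_cases hxe : x = e
  · subst hxe
    have hdD : d ∈ D \ {x} := ⟨hde.1, fun hdx => hde.2 (by simpa using hdx)⟩
    have : x ∈ D \ {x} :=
      hed.1 (D \ {x}) hxC (Set.diff_subset.trans hDX) hdD
    exact this.2 rfl
  · have : x ∈ D \ {x} :=
      hxD (D \ {x}) hxC (Set.diff_subset.trans hDX) ⟨heD, fun hc => hxe (Eq.symm (by simpa using hc))⟩
    exact this.2 rfl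

lemma aux_exists_max (h : IsStable 𝒞) {X : Set E} (hX : X ∈ 𝒞.C) :
    ∀ n (S : Set E), S ⊆ X → S.Finite → S.Nonempty → S.ncard ≤ n →
      ∃ e ∈ S, ∀ d ∈ S, ¬ lt 𝒞 X e d := by
  intro n
  induction n with
  | zero =>
    intro S _ hfin hne h0
    have := (Set.ncard_pos hfin).mpr hne
    omega
  | succ n ih =>
    intro S hSX hfin hne hcard
    obtain ⟨e, heS⟩ := hne
    by_cases hmax : ∀ d ∈ S, ¬ lt 𝒞 X e d
    · exact ⟨e, heS, hmax⟩
    · push_neg at hmax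
      obtain ⟨d, hdS, hlt⟩ := hmax
      set S' : Set E := {x ∈ S | lt 𝒞 X e x} with hS'
      have hS'sub : S' ⊆ S := fun x hx => hx.1
      have hS'X : S' ⊆ X := hS'sub.trans hSX
      have hfin' : S'.Finite := hfin.subset hS'sub
      have hne' : S'.Nonempty := ⟨d, hdS, hlt⟩
      have heS' : e ∉ S' := fun hx => hx.2.2 rfl
      have hss : S' ⊂ S := ⟨hS'sub, fun hsub => heS' (hsub heS)⟩
      have hcard' : S'.ncard ≤ n := by
        have := Set.ncard_lt_ncard hss hfin
        omega
      obtain ⟨f, hfS', hfmax⟩ := ih S' hS'X hfin' hne' hcard'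
      refine ⟨f, hfS'.1, fun g hgS hltfg => ?_⟩
      have hgX : g ∈ X := hSX hgS
      have hneg : e ≠ g := by
        rintro rfl
        exact aux_lt_asymm 𝒞 h hX (hSX heS) hltfg hfS'.2
      have hltg : lt 𝒞 X e g :=
        ⟨fun Z hZ hZX hgZ => hfS'.2.1 Z hZ hZX (hltfg.1 Z hZ hZX hgZ), hneg⟩
      exact hfmax g ⟨hgS, hltg⟩ hltfg

lemma aux_remove_max (h : IsStable 𝒞) {X : Set E} (hX : X ∈ 𝒞.C) {e : E}
    (he : e ∈ X) (hmax : ∀ d ∈ X, ¬ lt 𝒞 X e d) : X \ {e} ∈ 𝒞.C := by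
  classical
  have hfind : (X \ {e}).Finite := (𝒞.finite X hX).subset Set.diff_subset
  have key : X \ {e} = ⋃ d ∈ hfind.toFinset, {d' | le 𝒞 X d' d} := by
    ext x
    simp only [Set.mem_iUnion, Set.Finite.mem_toFinset, Set.mem_setOf_eq,
      Set.mem_diff, Set.mem_singleton_iff]
    constructor
    · intro hx
      exact ⟨x, hx, fun Z _ _ hz => hz⟩
    · rintro ⟨d, hd, hle⟩
      have hxX : x ∈ X := hle X hX subset_rfl hd.1
      refine ⟨hxX, fun hxe => ?_⟩
      subst hxe
      exact hmax d hd.1 ⟨hle, Ne.symm hd.2⟩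
  rw [key]
  exact aux_biUnion_mem 𝒞 h hX _ _ (fun d hd => by
    have hm := hfind.mem_toFinset.mp hd
    exact ⟨aux_down_mem 𝒞 h hX hm.1, fun x hx => hx X hX subset_rfl hm.1⟩)

end Aux

/-- the lifting of a stable configuration structure by one of its
configurations is again stable. -/
theorem stmt5 {E : Type u} {L : Type v} (𝒞 : CS E L) (h : IsStable 𝒞)
    (M : Set E) (hM : M ∈ 𝒞.C) :
    IsStable (lift 𝒞 M) := by
  refine ⟨⟨M, hM, subset_rfl, rfl, (Set.diff_self).symm⟩, ?_, ?_, ?_⟩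
  · -- connectedness
    rintro Z ⟨X, hX, hMX, hminX, rfl⟩ hne
    have hSne : (X \ M).Nonempty := Set.nonempty_iff_ne_empty.mpr hne
    have hSfin : (X \ M).Finite := (𝒞.finite X hX).subset Set.diff_subset
    obtain ⟨e, heS, hemax⟩ := aux_exists_max 𝒞 h hX ((X \ M).ncard) (X \ M)
      Set.diff_subset hSfin hSne le_rfl
    have hemaxX : ∀ d ∈ X, ¬ lt 𝒞 X e d := by
      intro d hd hlt
      by_cases hdM : d ∈ M
      · exact heS.2 (hlt.1 M hM hMX hdM)
      · exact hemax d ⟨hd, hdM⟩ hlt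
    have hXe : X \ {e} ∈ 𝒞.C := aux_remove_max 𝒞 h hX heS.1 hemaxX
    have hMXe : M ⊆ X \ {e} := fun x hx =>
      ⟨hMX hx, fun hxe => heS.2 (by rwa [Set.mem_singleton_iff.mp hxe] at hx)⟩
    refine ⟨e, heS, X \ {e}, hXe, hMXe, ?_, ?_⟩
    · exact aux_minE_sandwich 𝒞 h hXe hX hMXe Set.diff_subset hminX
    · exact Set.diff_diff_comm
  · -- bounded unions
    rintro Z1 ⟨X1, hX1, hM1, hmin1, rfl⟩ Z2 ⟨X2, hX2, hM2, hmin2, rfl⟩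
      Z3 ⟨X3, hX3, hM3, hmin3, rfl⟩ hsub
    have hU : X1 ∪ X2 ⊆ X3 := by
      rintro x (hx | hx)
      · by_cases hxM : x ∈ M
        · exact hM3 hxM
        · exact (hsub (Or.inl ⟨hx, hxM⟩)).1
      · by_cases hxM : x ∈ M
        · exact hM3 hxM
        · exact (hsub (Or.inr ⟨hx, hxM⟩)).1
    have hUC : X1 ∪ X2 ∈ 𝒞.C := h.2.2.1 X1 hX1 X2 hX2 X3 hX3 hU
    have e1 : minE 𝒞 X1 = minE 𝒞 (X1 ∪ X2) ∩ X1 :=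
      aux_minE_inter 𝒞 h hX1 hUC Set.subset_union_left
    have e2 : minE 𝒞 X2 = minE 𝒞 (X1 ∪ X2) ∩ X2 :=
      aux_minE_inter 𝒞 h hX2 hUC Set.subset_union_right
    have hminU : minE 𝒞 (X1 ∪ X2) = minE 𝒞 M := by
      apply Set.Subset.antisymm
      · intro x hx
        rcases hx.1 with hx1 | hx2
        · have : x ∈ minE 𝒞 X1 := by rw [e1]; exact ⟨hx, hx1⟩
          rwa [hmin1] at this
        · have : x ∈ minE 𝒞 X2 := by rw [e2]; exact ⟨hx, hx2⟩
          rwa [hmin2] at this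
      · intro x hx
        have hx1 : x ∈ minE 𝒞 X1 := by rwa [hmin1]
        rw [e1] at hx1
        exact hx1.1
    exact ⟨X1 ∪ X2, hUC, hM1.trans Set.subset_union_left, hminU,
      (Set.union_diff_distrib).symm⟩
  · -- bounded intersections
    rintro Z1 ⟨X1, hX1, hM1, hmin1, rfl⟩ Z2 ⟨X2, hX2, hM2, hmin2, rfl⟩
      Z3 ⟨X3, hX3, hM3, hmin3, rfl⟩ hsub
    have hU : X1 ∪ X2 ⊆ X3 := by
      rintro x (hx | hx)
      · by_cases hxM : x ∈ M
        · exact hM3 hxM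
        · exact (hsub (Or.inl ⟨hx, hxM⟩)).1
      · by_cases hxM : x ∈ M
        · exact hM3 hxM
        · exact (hsub (Or.inr ⟨hx, hxM⟩)).1
    have hIC : X1 ∩ X2 ∈ 𝒞.C := h.2.2.2 X1 hX1 X2 hX2 X3 hX3 hU
    have hMI : M ⊆ X1 ∩ X2 := Set.subset_inter hM1 hM2
    refine ⟨X1 ∩ X2, hIC, hMI, ?_, ?_⟩
    · exact aux_minE_sandwich 𝒞 h hIC hX1 hMI Set.inter_subset_left hmin1
    · ext x
      simp only [Set.mem_inter_iff, Set.mem_diff]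
      tauto
end

section
/- In a stable configuration structure, if X and Y are configurations with X ∪ Y ⊆ Z for some configuration Z, and e ∈ X ∩ Y, then the depth of e with respect to X equals the depth of e with respect to Y. -/
universe u v

open CS

/-! Below an event `e`, a sub-configuration `W ⊆ X` sees the same causal order as `X`:
for any configuration `V ⊆ X` containing `e`, stability makes `V ∩ W` a configuration.
Moreover every `<_X`-chain ending at `e` already lies in `W`, so `depth_W e = depth_X e`.
Applied to `W = X ∩ Y`, a configuration because `X ∪ Y` is bounded by `Z`, this gives the
theorem. -/

namespace CS

variable {E : Type u} {L : Type v} {𝒞 : CS E L}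

theorem le_iff_of_subset (h𝒞 : IsStable 𝒞) {W X : Set E} (hW : W ∈ 𝒞.C) (hX : X ∈ 𝒞.C)
    (hWX : W ⊆ X) {d e : E} (he : e ∈ W) : le 𝒞 W d e ↔ le 𝒞 X d e := by
  refine ⟨fun hle V hV hVX heV => ?_, fun hle V hV hVW heV => hle V hV (hVW.trans hWX) heV⟩
  have hVW : V ∩ W ∈ 𝒞.C := h𝒞.2.2.2 V hV W hW X hX (Set.union_subset hVX hWX)
  exact (hle (V ∩ W) hVW Set.inter_subset_right ⟨heV, he⟩).1

theorem lt_iff_of_subset (h𝒞 : IsStable 𝒞) {W X : Set E} (hW : W ∈ 𝒞.C) (hX : X ∈ 𝒞.C)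
    (hWX : W ⊆ X) {d e : E} (he : e ∈ W) : lt 𝒞 W d e ↔ lt 𝒞 X d e :=
  and_congr_left' (le_iff_of_subset h𝒞 hW hX hWX he)

theorem mem_of_isChain_lt {W X : Set E} (hW : W ∈ 𝒞.C) (hWX : W ⊆ X) {e : E} (he : e ∈ W)
    {l : List E} (hl : l.IsChain (lt 𝒞 X)) (hlast : l.getLast? = some e) : ∀ x ∈ l, x ∈ W :=
  List.IsChain.backwards_induction (· ∈ W) l hl (fun _ _ hxy hy => hxy.1 W hW hWX hy)
    (fun hne => by
      rw [List.getLast?_eq_some_getLast hne] at hlast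
      exact Option.some.inj hlast ▸ he)

theorem depth_eq_of_subset (h𝒞 : IsStable 𝒞) {W X : Set E} (hW : W ∈ 𝒞.C) (hX : X ∈ 𝒞.C)
    (hWX : W ⊆ X) {e : E} (he : e ∈ W) : depth 𝒞 W e = depth 𝒞 X e := by
  have hchains : ∀ l : List E,
      (l.IsChain (lt 𝒞 W) ∧ (∀ x ∈ l, x ∈ W) ∧ l.getLast? = some e) ↔
        (l.IsChain (lt 𝒞 X) ∧ (∀ x ∈ l, x ∈ X) ∧ l.getLast? = some e) := by
    intro l
    constructor
    · rintro ⟨hl, hmem, hlast⟩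
      refine ⟨List.IsChain.imp_of_mem_imp (fun a b _ hb hab => ?_) hl,
        fun x hx => hWX (hmem x hx), hlast⟩
      exact (lt_iff_of_subset h𝒞 hW hX hWX (hmem b hb)).1 hab
    · rintro ⟨hl, -, hlast⟩
      have hmem := mem_of_isChain_lt hW hWX he hl hlast
      refine ⟨List.IsChain.imp_of_mem_imp (fun a b _ hb hab => ?_) hl, hmem, hlast⟩
      exact (lt_iff_of_subset h𝒞 hW hX hWX (hmem b hb)).2 hab
  exact congrArg sSup (Set.ext fun _ => exists_congr fun l => and_congr_right' (hchains l))

end CS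

/-- depth is invariant between configurations bounded by a common
configuration. -/
theorem stmt9 {E : Type u} {L : Type v} (𝒞 : CS E L) (h : IsStable 𝒞)
    (X Y Z : Set E) (hX : X ∈ 𝒞.C) (hY : Y ∈ 𝒞.C) (hZ : Z ∈ 𝒞.C)
    (hXY : X ∪ Y ⊆ Z) (e : E) (he : e ∈ X ∩ Y) :
    depth 𝒞 X e = depth 𝒞 Y e := by
  have hinter : X ∩ Y ∈ 𝒞.C := h.2.2.2 X hX Y hY Z hZ hXY
  rw [← depth_eq_of_subset h hinter hX Set.inter_subset_left he,
    depth_eq_of_subset h hinter hY Set.inter_subset_right he]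
end

section
/- Every depth-respecting bisimulation between stable configuration structures is a step bisimulation; hence depth-respecting bisimulation equivalence is included in step bisimulation equivalence. -/
universe u v

open CS

/-!
To match a step `X —F→ X'`, fire the events of `F` one at a time in non-increasing order of
depth. Stability makes each intermediate set a configuration, and the depth of an event is the
same in every configuration containing it, so the depth-respecting bisimulation matches each
single transition by one with the same label and depth. The matched events are pairwise
concurrent: a later one cannot cause an earlier one, because configurations are closed under
causes, and an earlier one cannot cause a later one, because causality strictly increases depth
while the later one is no deeper.
-/

theorem Set.sdiff_eq_insert_sdiff_of_sdiff_eq_singleton {α : Type*} {s t u : Set α} {a : α}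
    (hst : s ⊆ t) (htu : t ⊆ u) (ha : t \ s = {a}) : u \ s = insert a (u \ t) := by
  have hat : a ∈ t \ s := ha ▸ rfl
  ext x
  by_cases hxa : x = a
  · subst hxa; simp [htu hat.1, hat.2]
  · have hxts : x ∈ t → x ∈ s := fun hxt =>
      by_contra fun hxs => hxa (ha ▸ ⟨hxt, hxs⟩ : x ∈ ({a} : Set α))
    simp only [Set.mem_sdiff, Set.mem_insert_iff, hxa, false_or]
    exact ⟨fun ⟨hxu, hxs⟩ => ⟨hxu, fun hxt => hxs (hxts hxt)⟩,
      fun ⟨hxu, hxt⟩ => ⟨hxu, fun hxs => hxt (hst hxs)⟩⟩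

namespace CS

section

variable {E : Type*} {L : Type*} {𝒞 : CS E L} {X X₁ X₂ : Set E} {d e : E}

theorem le.trans {c : E} (hde : le 𝒞 X d e) (hec : le 𝒞 X e c) : le 𝒞 X d c :=
  fun Y hY hYX hc => hde Y hY hYX (hec Y hY hYX hc)

theorem le.mono (h : le 𝒞 X₂ d e) (h12 : X₁ ⊆ X₂) : le 𝒞 X₁ d e :=
  fun Y hY hYX => h Y hY (hYX.trans h12)

theorem IsStable.eq_of_le_of_le (h𝒞 : IsStable 𝒞) (hX : X ∈ 𝒞.C) (he : e ∈ X)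
    (hde : le 𝒞 X d e) (hed : le 𝒞 X e d) : d = e := by
  induction hn : X.ncard generalizing X with
  | zero =>
    rw [Set.ncard_eq_zero (𝒞.finite X hX)] at hn
    exact absurd he (hn ▸ Set.notMem_empty e)
  | succ n ih =>
    by_contra hne
    -- Stability lets us peel off some event `f`; it can be neither `d` nor `e`,
    -- since each of them causes the other.
    obtain ⟨f, hf, hXf⟩ := h𝒞.2.1 X hX (Set.nonempty_iff_ne_empty.mp ⟨e, he⟩)
    have hfd : f ≠ d := by
      rintro rfl
      exact (hde _ hXf Set.sdiff_subset ⟨he, Ne.symm hne⟩).2 rfl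
    have hfe : f ≠ e := by
      rintro rfl
      exact (hed _ hXf Set.sdiff_subset ⟨hde X hX subset_rfl he, hne⟩).2 rfl
    refine hne (ih hXf ⟨he, Ne.symm hfe⟩ (hde.mono Set.sdiff_subset)
      (hed.mono Set.sdiff_subset) ?_)
    rw [Set.ncard_sdiff_singleton_of_mem hf, hn, Nat.add_sub_cancel]

theorem IsStable.lt_trans (h𝒞 : IsStable 𝒞) (hX : X ∈ 𝒞.C) {b c : E} (hc : c ∈ X)
    (hdb : lt 𝒞 X d b) (hbc : lt 𝒞 X b c) : lt 𝒞 X d c := by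
  refine ⟨hdb.1.trans hbc.1, ?_⟩
  rintro rfl
  exact hbc.2 (h𝒞.eq_of_le_of_le hX hc hbc.1 hdb.1)

theorem IsStable.pairwise_lt_of_isChain (h𝒞 : IsStable 𝒞) (hX : X ∈ 𝒞.C) {l : List E}
    (hl : l.IsChain (lt 𝒞 X)) (hlX : ∀ x ∈ l, x ∈ X) : l.Pairwise (lt 𝒞 X) := by
  let ltIn : E → E → Prop := fun x y => lt 𝒞 X x y ∧ y ∈ X
  have : Trans ltIn ltIn ltIn := ⟨fun hxy hyz => ⟨h𝒞.lt_trans hX hyz.2 hxy.1 hyz.1, hyz.2⟩⟩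
  exact ((hl.imp_of_mem_imp fun _ y _ hy hxy => ⟨hxy, hlX y hy⟩).pairwise).imp And.left

theorem IsStable.lt_iff_of_subset (h𝒞 : IsStable 𝒞) (hX₁ : X₁ ∈ 𝒞.C) (hX₂ : X₂ ∈ 𝒞.C)
    (h12 : X₁ ⊆ X₂) (he : e ∈ X₁) : lt 𝒞 X₁ d e ↔ lt 𝒞 X₂ d e := by
  refine and_congr_left' ⟨fun h Y hY hYX₂ heY => ?_, fun h => h.mono h12⟩
  have hYX₁ : Y ∩ X₁ ∈ 𝒞.C := h𝒞.2.2.2 Y hY X₁ hX₁ X₂ hX₂ (Set.union_subset hYX₂ h12)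
  exact (h _ hYX₁ Set.inter_subset_right ⟨heY, he⟩).1

def chainLengths (𝒞 : CS E L) (X : Set E) (e : E) : Set ℕ :=
  {n | ∃ l : List E, l.length = n ∧ l.IsChain (lt 𝒞 X) ∧
    (∀ x ∈ l, x ∈ X) ∧ l.getLast? = some e}

theorem depth_eq_sSup_chainLengths : depth 𝒞 X e = sSup (chainLengths 𝒞 X e) := rfl

theorem IsStable.bddAbove_chainLengths (h𝒞 : IsStable 𝒞) (hX : X ∈ 𝒞.C) :
    BddAbove (chainLengths 𝒞 X e) := by
  classical
  refine ⟨X.ncard, ?_⟩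
  rintro n ⟨l, rfl, hl, hlX, -⟩
  have hnodup : l.Nodup := (h𝒞.pairwise_lt_of_isChain hX hl hlX).imp (fun h => h.2)
  rw [← List.toFinset_card_of_nodup hnodup, ← Set.ncard_coe_finset]
  exact Set.ncard_le_ncard (fun x hx => hlX x (List.mem_toFinset.mp hx)) (𝒞.finite X hX)

theorem IsStable.depth_mem_chainLengths (h𝒞 : IsStable 𝒞) (hX : X ∈ 𝒞.C) (he : e ∈ X) :
    depth 𝒞 X e ∈ chainLengths 𝒞 X e :=
  Nat.sSup_mem ⟨1, [e], rfl, List.isChain_singleton e, by simpa using he, rfl⟩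
    (h𝒞.bddAbove_chainLengths hX)

theorem IsStable.depth_lt_depth (h𝒞 : IsStable 𝒞) (hX : X ∈ 𝒞.C) (he : e ∈ X)
    (hde : lt 𝒞 X d e) : depth 𝒞 X d < depth 𝒞 X e := by
  obtain ⟨l, hlen, hl, hlX, hlast⟩ :=
    h𝒞.depth_mem_chainLengths hX (hde.1 X hX subset_rfl he)
  refine Nat.lt_of_succ_le (le_csSup (h𝒞.bddAbove_chainLengths hX) ⟨l ++ [e], ?_, ?_, ?_, ?_⟩)
  · simp [hlen]
  · refine List.isChain_append.mpr ⟨hl, List.isChain_singleton e, ?_⟩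
    simp_all
  · simpa [or_imp, forall_and] using ⟨hlX, he⟩
  · simp

theorem IsStable.depth_eq_of_subset (h𝒞 : IsStable 𝒞) (hX₁ : X₁ ∈ 𝒞.C) (hX₂ : X₂ ∈ 𝒞.C)
    (h12 : X₁ ⊆ X₂) (he : e ∈ X₁) : depth 𝒞 X₁ e = depth 𝒞 X₂ e := by
  have hlt (l : List E) (hlX : ∀ x ∈ l, x ∈ X₁) :
      l.IsChain (lt 𝒞 X₁) ↔ l.IsChain (lt 𝒞 X₂) :=
    List.IsChain.iff_of_mem_imp fun _ y _ hy => h𝒞.lt_iff_of_subset hX₁ hX₂ h12 (hlX y hy)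
  simp only [depth_eq_sSup_chainLengths]
  congr 1
  ext n
  constructor
  · rintro ⟨l, hlen, hl, hlX, hlast⟩
    exact ⟨l, hlen, (hlt l hlX).mp hl, fun x hx => h12 (hlX x hx), hlast⟩
  · rintro ⟨l, hlen, hl, -, hlast⟩
    -- Every element of a causal chain in `X₂` ending in `e ∈ X₁` causes `e`, so lies in `X₁`.
    have hlX₁ : ∀ x ∈ l, x ∈ X₁ :=
      List.IsChain.backwards_induction (· ∈ X₁) l hl (fun _ _ hxy hy => hxy.1 X₁ hX₁ h12 hy)
        fun hne => by
          rw [List.getLast?_eq_some_getLast hne, Option.some_inj] at hlast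
          exact hlast ▸ he
    exact ⟨l, hlen, (hlt l hlX₁).mpr hl, hlX₁, hlast⟩

theorem IsStable.exists_history (h𝒞 : IsStable 𝒞) (hX : X ∈ 𝒞.C) (he : e ∈ X) :
    ∃ H ∈ 𝒞.C, H ⊆ X ∧ e ∈ H ∧ ∀ d ∈ H, le 𝒞 X d e := by
  let S : Set (Set E) := {Y | Y ∈ 𝒞.C ∧ Y ⊆ X ∧ e ∈ Y}
  have hS : S.Finite := (𝒞.finite X hX).finite_subsets.subset fun _ hY => hY.2.1
  obtain ⟨H, ⟨hH, hHX, heH⟩, hmin⟩ := hS.exists_minimal ⟨X, hX, subset_rfl, he⟩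
  refine ⟨H, hH, hHX, heH, fun d hd Y hY hYX heY => ?_⟩
  have hHY : H ∩ Y ∈ S :=
    ⟨h𝒞.2.2.2 H hH Y hY X hX (Set.union_subset hHX hYX),
      Set.inter_subset_left.trans hHX, heH, heY⟩
  exact (hmin hHY Set.inter_subset_left hd).2

theorem IsStable.insert_mem {X' : Set E} (h𝒞 : IsStable 𝒞) (hX : X ∈ 𝒞.C) (hX' : X' ∈ 𝒞.C)
    (hXX' : X ⊆ X') (he : e ∈ X') (hcauses : ∀ d, lt 𝒞 X' d e → d ∈ X) :
    insert e X ∈ 𝒞.C := by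
  obtain ⟨H, hH, hHX', heH, hHe⟩ := h𝒞.exists_history hX' he
  have hXH : X ∪ H = insert e X := by
    refine Set.Subset.antisymm (Set.union_subset (Set.subset_insert e X) fun d hd => ?_)
      (Set.insert_subset (Or.inr heH) Set.subset_union_left)
    by_cases hde : d = e
    · exact hde ▸ Set.mem_insert d X
    · exact Set.mem_insert_of_mem e (hcauses d ⟨hHe d hd, hde⟩)
  exact hXH ▸ h𝒞.2.2.1 X hX H hH X' hX' (Set.union_subset hXX' hHX')

theorem IsStable.fTransD_insert {X' : Set E} (h𝒞 : IsStable 𝒞) (hX : X ∈ 𝒞.C) (hX' : X' ∈ 𝒞.C)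
    (hXX' : X ⊆ X') (he : e ∈ X' \ X) (hcauses : ∀ d ∈ X' \ X, ¬ lt 𝒞 X' d e) :
    FTransD 𝒞 (𝒞.label e) (depth 𝒞 X' e) X (insert e X) := by
  have hX₁ : insert e X ∈ 𝒞.C := h𝒞.insert_mem hX hX' hXX' he.1 fun d hde =>
    by_contra fun hdX => hcauses d ⟨hde.1 X' hX' subset_rfl he.1, hdX⟩ hde
  exact ⟨hX, hX₁, Set.subset_insert e X, e, by simp [he.2], rfl,
    h𝒞.depth_eq_of_subset hX₁ hX' (Set.insert_subset he.1 hXX') (Set.mem_insert e X)⟩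

theorem IsStable.co_of_depth_le {X' : Set E} (h𝒞 : IsStable 𝒞) (hX : X ∈ 𝒞.C)
    (hX' : X' ∈ 𝒞.C) (hXX' : X ⊆ X') (hd : d ∈ X) (he : e ∈ X' \ X)
    (hde : depth 𝒞 X' e ≤ depth 𝒞 X' d) : co 𝒞 X' d e :=
  ⟨fun h => (h𝒞.depth_lt_depth hX' he.1 h).not_ge hde, fun h => he.2 (h.1 X hX hXX' hd)⟩

end

section

variable {E₁ E₂ : Type*} {L : Type*}

def IsDepthSim (𝒞 : CS E₁ L) (𝒟 : CS E₂ L) (R : Set E₁ → Set E₂ → Prop) : Prop :=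
  ∀ X Y, R X Y → ∀ a k X', FTransD 𝒞 a k X X' → ∃ Y', FTransD 𝒟 a k Y Y' ∧ R X' Y'

variable {𝒞 : CS E₁ L} {𝒟 : CS E₂ L} {R : Set E₁ → Set E₂ → Prop}

theorem IsDepthSim.exists_matching_events
    (h𝒞 : IsStable 𝒞) (h𝒟 : IsStable 𝒟) (hR : IsDepthSim 𝒞 𝒟 R)
    (F : Finset E₁) {X X' : Set E₁} {Y : Set E₂} (hXY : R X Y) (hX : X ∈ 𝒞.C) (hY : Y ∈ 𝒟.C)
    (hX' : X' ∈ 𝒞.C) (hXX' : X ⊆ X') (hF : ↑F = X' \ X)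
    (hco : ∀ d ∈ F, ∀ e ∈ F, co 𝒞 X' d e) :
    ∃ (Y' : Set E₂) (G : Finset E₂), Y' ∈ 𝒟.C ∧ Y ⊆ Y' ∧ ↑G = Y' \ Y ∧
      (∀ d ∈ G, ∀ e ∈ G, co 𝒟 Y' d e) ∧
      G.val.map (fun g => (𝒟.label g, depth 𝒟 Y' g)) =
        F.val.map (fun x => (𝒞.label x, depth 𝒞 X' x)) ∧ R X' Y' := by
  classical
  induction F using Finset.strongInduction generalizing X Y with
  | H F ih =>
  have hmemF {x : E₁} : x ∈ F ↔ x ∈ X' \ X := by rw [← Finset.mem_coe, hF]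
  rcases F.eq_empty_or_nonempty with rfl | hFne
  · obtain rfl : X' = X := (Set.sdiff_eq_empty.mp (by simpa using hF.symm)).antisymm hXX'
    exact ⟨Y, ∅, hY, subset_rfl, by simp, by simp, rfl, hXY⟩
  -- Fire first an event `e` of maximal depth; its match `f` then has maximal depth in the
  -- matched step, so no later matched event can be caused by it.
  obtain ⟨e, heF, hmax⟩ := F.exists_max_image (depth 𝒞 X') hFne
  have heX : e ∈ X' \ X := hmemF.mp heF
  have hstep : FTransD 𝒞 (𝒞.label e) (depth 𝒞 X' e) X (insert e X) :=
    h𝒞.fTransD_insert hX hX' hXX' heX fun d hd hde => (hco d (hmemF.mpr hd) e heF).1 hde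
  obtain ⟨Y₁, ⟨-, hY₁, hYY₁, f, hf, hfl, hfk⟩, hXY₁⟩ := hR X Y hXY _ _ _ hstep
  have hX₁X' : insert e X ⊆ X' := Set.insert_subset heX.1 hXX'
  have hF₁ : ↑(F.erase e) = X' \ insert e X := by
    rw [Finset.coe_erase, hF, Set.sdiff_sdiff, Set.union_singleton]
  obtain ⟨Y', G₁, hY', hY₁Y', hG₁, hG₁co, hG₁ld, hXY'⟩ :=
    ih (F.erase e) (F.erase_ssubset heF) hXY₁ hstep.2.1 hY₁ hX₁X' hF₁ fun d hd d' hd' =>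
      hco d (Finset.mem_of_mem_erase hd) d' (Finset.mem_of_mem_erase hd')
  have hfY₁ : f ∈ Y₁ \ Y := hf ▸ rfl
  have hfG₁ : f ∉ G₁ := fun h => (hG₁ ▸ h : f ∈ Y' \ Y₁).2 hfY₁.1
  have hfdepth : depth 𝒟 Y' f = depth 𝒞 X' e :=
    (h𝒟.depth_eq_of_subset hY₁ hY' hY₁Y' hfY₁.1).symm.trans hfk
  have hG₁depth (g : E₂) (hg : g ∈ G₁) : depth 𝒟 Y' g ≤ depth 𝒞 X' e := by
    obtain ⟨x, hx, hxg⟩ := Multiset.mem_map.mp (hG₁ld ▸ Multiset.mem_map_of_mem _ hg)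
    have hxg : depth 𝒞 X' x = depth 𝒟 Y' g := congrArg Prod.snd hxg
    exact hxg ▸ hmax x (Finset.mem_of_mem_erase hx)
  have hfco (g : E₂) (hg : g ∈ G₁) : co 𝒟 Y' f g :=
    h𝒟.co_of_depth_le hY₁ hY' hY₁Y' hfY₁.1 (hG₁ ▸ hg) (hfdepth ▸ hG₁depth g hg)
  refine ⟨Y', Finset.cons f G₁ hfG₁, hY', hYY₁.trans hY₁Y', ?_, ?_, ?_, hXY'⟩
  · rw [Finset.coe_cons, hG₁,
      Set.sdiff_eq_insert_sdiff_of_sdiff_eq_singleton hYY₁ hY₁Y' hf]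
  · simp only [Finset.forall_mem_cons]
    exact ⟨⟨⟨fun h => h.2 rfl, fun h => h.2 rfl⟩, hfco⟩,
      fun g hg => ⟨(hfco g hg).symm, hG₁co g hg⟩⟩
  · rw [Finset.cons_val, Multiset.map_cons, hG₁ld, hfl, hfdepth, Finset.erase_val,
      ← Multiset.map_cons (fun x => (𝒞.label x, depth 𝒞 X' x)), Multiset.cons_erase heF]

theorem IsDepthSim.exists_step (h𝒞 : IsStable 𝒞) (h𝒟 : IsStable 𝒟) (hR : IsDepthSim 𝒞 𝒟 R)
    {A : Multiset L} {X X' : Set E₁} {Y : Set E₂} (hXY : R X Y) (hY : Y ∈ 𝒟.C)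
    (hstep : Step 𝒞 A X X') :
    ∃ Y', Step 𝒟 A Y Y' ∧ R X' Y' := by
  obtain ⟨hX, hX', hXX', F, hF, hco, rfl⟩ := hstep
  obtain ⟨Y', G, hY', hYY', hG, hGco, hGld, hXY'⟩ :=
    hR.exists_matching_events h𝒞 h𝒟 F hXY hX hY hX' hXX' hF hco
  refine ⟨Y', ⟨hY, hY', hYY', G, hG, hGco, ?_⟩, hXY'⟩
  simpa only [Multiset.map_map, Function.comp_def] using congrArg (Multiset.map Prod.fst) hGld

end

theorem IsDB.isSB {E₁ E₂ : Type u} {L : Type*} {𝒞 : CS E₁ L} {𝒟 : CS E₂ L}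
    {R : Set E₁ → Set E₂ → Prop}
    (h𝒞 : IsStable 𝒞) (h𝒟 : IsStable 𝒟) (hR : IsDB 𝒞 𝒟 R) : IsSB 𝒞 𝒟 R := by
  obtain ⟨⟨hR₀, hdom⟩, hsim⟩ := hR
  refine ⟨⟨hR₀, hdom⟩, fun X Y hXY => ⟨fun A X' hstep => ?_, fun A Y' hstep => ?_⟩⟩
  · exact IsDepthSim.exists_step h𝒞 h𝒟 (fun X Y h => (hsim X Y h).1) hXY (hdom X Y hXY).2 hstep
  · exact IsDepthSim.exists_step (R := flip R) h𝒟 h𝒞 (fun Y X h => (hsim X Y h).2) hXY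
      (hdom X Y hXY).1 hstep

end CS

/-- every depth-respecting bisimulation is a step bisimulation;
hence DB equivalence is included in SB equivalence. -/
theorem stmt10 {E₁ E₂ : Type u} {L : Type v} (𝒞 : CS E₁ L) (𝒟 : CS E₂ L)
    (h𝒞 : IsStable 𝒞) (h𝒟 : IsStable 𝒟) :
    (∀ R : Set E₁ → Set E₂ → Prop, IsDB 𝒞 𝒟 R → IsSB 𝒞 𝒟 R) ∧
    ((∃ R : Set E₁ → Set E₂ → Prop, IsDB 𝒞 𝒟 R) →
      (∃ R : Set E₁ → Set E₂ → Prop, IsSB 𝒞 𝒟 R)) :=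
  ⟨fun _ hR => hR.isSB h𝒞 h𝒟, fun ⟨R, hR⟩ => ⟨R, hR.isSB h𝒞 h𝒟⟩⟩
end
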